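/- arXiv:1209.1038 — 2 statements merged into one kernel-verified Lean document; each statement's English description precedes it below -/
import Mathlib

section
/- Let (X, ν) be a measure space, T > 0, 1 < p < 2, μ > 0, and let δ₁, δ₂ ≥ 0 and δ := ((2−p)/2)δ₁ + δ₂. Let g, F : (0,T) × X → ℝ^d be measurable and suppose there are constants K₁, K₂ ≥ 0 such that t^{δ₁} (∫_X (μ+|F(t,x)|²)^(p/2) dν(x))^(1/p) ≤ K₁ for almost every t ∈ (0,T), and ∫₀^T t^{2δ₂} ∫_X (μ+|F(t,x)|²)^((p−2)/2) |g(t,x)|² dν(x) dt ≤ K₂. Then ∫₀^T t^{2δ} (∫_X |g(t,x)|^p dν(x))^(2/p) dt ≤ K₁^(2−p) K₂. -/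
/-!
Write `w = μ + |F|²`. Pointwise `|g|^p = (w^((p-2)/2) |g|²)^(p/2) · (w^(p/2))^((2-p)/2)`, so
Hölder's inequality with the exponents `p/2 + (2-p)/2 = 1` bounds `‖g(t)‖_p²` by the weighted
`L²` norm of `g(t)` times `‖w(t)^(1/2)‖_p^(2-p)`. The second factor is at most `(K₁ t^(-δ₁))^(2-p)`,
and integrating in time against `t^(2δ₂)` gives the claim.
-/

open MeasureTheory ENNReal

lemma Real.rpow_eq_weighted_mul {p w s : ℝ} (hw : 0 < w) (hs : 0 ≤ s) :
    s ^ p = (w ^ ((p - 2) / 2) * s ^ 2) ^ (p / 2) * (w ^ (p / 2)) ^ ((2 - p) / 2) := by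
  rw [Real.mul_rpow (by positivity) (by positivity), ← Real.rpow_natCast s 2,
    ← Real.rpow_mul hs, ← Real.rpow_mul hw.le, ← Real.rpow_mul hw.le, mul_right_comm,
    ← Real.rpow_add hw, show (p - 2) / 2 * (p / 2) + p / 2 * ((2 - p) / 2) = 0 by ring,
    Real.rpow_zero, one_mul]
  ring_nf

section WeightedHolder

variable {α E : Type*} [MeasurableSpace α] [NormedAddCommGroup E] [MeasurableSpace E]
  [OpensMeasurableSpace E] (ν : Measure α) {p : ℝ} {w : α → ℝ} {f : α → E}

theorem lintegral_rpow_le_weighted (hp0 : 0 ≤ p) (hp2 : p ≤ 2) (hw : AEMeasurable w ν)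
    (hw0 : ∀ x, 0 < w x) (hf : AEMeasurable f ν) :
    ∫⁻ x, ENNReal.ofReal (‖f x‖ ^ p) ∂ν ≤
      (∫⁻ x, ENNReal.ofReal (w x ^ ((p - 2) / 2) * ‖f x‖ ^ 2) ∂ν) ^ (p / 2) *
        (∫⁻ x, ENNReal.ofReal (w x ^ (p / 2)) ∂ν) ^ ((2 - p) / 2) := by
  have hsplit : ∀ x, ENNReal.ofReal (‖f x‖ ^ p) =
      ENNReal.ofReal (w x ^ ((p - 2) / 2) * ‖f x‖ ^ 2) ^ (p / 2) *
        ENNReal.ofReal (w x ^ (p / 2)) ^ ((2 - p) / 2) := fun x => by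
    have := hw0 x
    rw [ofReal_rpow_of_nonneg (by positivity) (by positivity),
      ofReal_rpow_of_nonneg (by positivity) (by linarith), ← ofReal_mul (by positivity),
      ← Real.rpow_eq_weighted_mul this (norm_nonneg _)]
  simp_rw [hsplit]
  exact lintegral_mul_norm_pow_le (by fun_prop) (by fun_prop) (by positivity) (by linarith)
    (by ring)

theorem rpow_two_div_lintegral_rpow_le_weighted (hp0 : 0 < p) (hp2 : p ≤ 2)
    (hw : AEMeasurable w ν) (hw0 : ∀ x, 0 < w x) (hf : AEMeasurable f ν) :
    (∫⁻ x, ENNReal.ofReal (‖f x‖ ^ p) ∂ν) ^ (2 / p) ≤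
      (∫⁻ x, ENNReal.ofReal (w x ^ ((p - 2) / 2) * ‖f x‖ ^ 2) ∂ν) *
        (∫⁻ x, ENNReal.ofReal (w x ^ (p / 2)) ∂ν) ^ ((2 - p) / p) := by
  have := rpow_le_rpow (lintegral_rpow_le_weighted ν hp0.le hp2 hw hw0 hf)
    (by positivity : (0 : ℝ) ≤ 2 / p)
  rwa [mul_rpow_of_nonneg _ _ (by positivity), ← rpow_mul, ← rpow_mul,
    show p / 2 * (2 / p) = 1 by field_simp, rpow_one,
    show (2 - p) / 2 * (2 / p) = (2 - p) / p by field_simp] at this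

end WeightedHolder

theorem ENNReal.rpow_mul_mul_rpow_le {a b A B G K : ℝ≥0∞} {p : ℝ} (hp2 : p ≤ 2)
    (hG : G ^ (2 / p) ≤ A * B ^ ((2 - p) / p)) (hB : a * B ^ (1 / p) ≤ K) :
    a ^ (2 - p) * b * G ^ (2 / p) ≤ K ^ (2 - p) * (b * A) := by
  have hB' : a ^ (2 - p) * B ^ ((2 - p) / p) ≤ K ^ (2 - p) := by
    have := rpow_le_rpow hB (by linarith : 0 ≤ 2 - p)
    rwa [mul_rpow_of_nonneg _ _ (by linarith), ← rpow_mul, one_div_mul_eq_div] at this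
  calc a ^ (2 - p) * b * G ^ (2 / p) ≤ a ^ (2 - p) * b * (A * B ^ ((2 - p) / p)) := by gcongr
    _ = a ^ (2 - p) * B ^ ((2 - p) / p) * (b * A) := by ring
    _ ≤ K ^ (2 - p) * (b * A) := by gcongr

lemma ENNReal.ofReal_rpow_two_mul_eq {t p δ₁ δ₂ δ : ℝ} (ht : 0 < t)
    (hδ : δ = (2 - p) / 2 * δ₁ + δ₂) :
    ENNReal.ofReal (t ^ (2 * δ)) =
      ENNReal.ofReal (t ^ δ₁) ^ (2 - p) * ENNReal.ofReal (t ^ (2 * δ₂)) := by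
  rw [ofReal_rpow_of_pos (by positivity), ← ofReal_mul (by positivity),
    ← Real.rpow_mul ht.le, ← Real.rpow_add ht, hδ]
  ring_nf

theorem stmt_6_general {X : Type*} [MeasurableSpace X] (ν : Measure X)
    (T p μ δ₁ δ₂ δ K₁ K₂ : ℝ) (hp1 : 1 < p) (hp2 : p < 2) (hμ : 0 < μ)
    (hδ : δ = (2 - p) / 2 * δ₁ + δ₂)
    (hK₁ : 0 ≤ K₁)
    (d : ℕ) (g F : ℝ → X → EuclideanSpace ℝ (Fin d))
    (hg : Measurable (Function.uncurry g)) (hF : Measurable (Function.uncurry F))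
    (h1 : ∀ᵐ t ∂(volume.restrict (Set.Ioo (0 : ℝ) T)),
      ENNReal.ofReal (t ^ δ₁) *
          (∫⁻ x, ENNReal.ofReal ((μ + ‖F t x‖ ^ 2) ^ (p / 2)) ∂ν) ^ (1 / p)
        ≤ ENNReal.ofReal K₁)
    (h2 : ∫⁻ t in Set.Ioo (0 : ℝ) T, (ENNReal.ofReal (t ^ (2 * δ₂)) *
          ∫⁻ x, ENNReal.ofReal ((μ + ‖F t x‖ ^ 2) ^ ((p - 2) / 2) * ‖g t x‖ ^ 2) ∂ν)
        ≤ ENNReal.ofReal K₂) :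
    ∫⁻ t in Set.Ioo (0 : ℝ) T, (ENNReal.ofReal (t ^ (2 * δ)) *
          (∫⁻ x, ENNReal.ofReal (‖g t x‖ ^ p) ∂ν) ^ (2 / p))
      ≤ ENNReal.ofReal (K₁ ^ (2 - p) * K₂) := by
  have hpointwise : ∀ᵐ t ∂(volume.restrict (Set.Ioo (0 : ℝ) T)),
      ENNReal.ofReal (t ^ (2 * δ)) * (∫⁻ x, ENNReal.ofReal (‖g t x‖ ^ p) ∂ν) ^ (2 / p) ≤
        ENNReal.ofReal (K₁ ^ (2 - p)) * (ENNReal.ofReal (t ^ (2 * δ₂)) *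
          ∫⁻ x, ENNReal.ofReal ((μ + ‖F t x‖ ^ 2) ^ ((p - 2) / 2) * ‖g t x‖ ^ 2) ∂ν) := by
    filter_upwards [h1, ae_restrict_mem measurableSet_Ioo] with t h1t ht
    rw [ENNReal.ofReal_rpow_two_mul_eq ht.1 hδ, ← ofReal_rpow_of_nonneg hK₁ (by linarith)]
    refine ENNReal.rpow_mul_mul_rpow_le hp2.le ?_ h1t
    exact rpow_two_div_lintegral_rpow_le_weighted ν (by linarith) hp2.le
      (by fun_prop) (fun x => by positivity) (hg.comp measurable_prodMk_left).aemeasurable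
  calc _ ≤ ENNReal.ofReal (K₁ ^ (2 - p)) * ∫⁻ t in Set.Ioo (0 : ℝ) T,
        (ENNReal.ofReal (t ^ (2 * δ₂)) *
          ∫⁻ x, ENNReal.ofReal ((μ + ‖F t x‖ ^ 2) ^ ((p - 2) / 2) * ‖g t x‖ ^ 2) ∂ν) :=
        (lintegral_mono_ae hpointwise).trans_eq (lintegral_const_mul' _ _ ofReal_ne_top)
    _ ≤ ENNReal.ofReal (K₁ ^ (2 - p)) * ENNReal.ofReal K₂ := by gcongr
    _ = ENNReal.ofReal (K₁ ^ (2 - p) * K₂) := (ofReal_mul (by positivity)).symm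

/-- Lemma A.1 of the paper. -/
theorem stmt_6 {X : Type*} [MeasurableSpace X] (ν : Measure X)
    (T p μ δ₁ δ₂ δ K₁ K₂ : ℝ) (hT : 0 < T) (hp1 : 1 < p) (hp2 : p < 2) (hμ : 0 < μ)
    (hδ₁ : 0 ≤ δ₁) (hδ₂ : 0 ≤ δ₂) (hδ : δ = (2 - p) / 2 * δ₁ + δ₂)
    (hK₁ : 0 ≤ K₁) (hK₂ : 0 ≤ K₂)
    (d : ℕ) (g F : ℝ → X → EuclideanSpace ℝ (Fin d))
    (hg : Measurable (Function.uncurry g)) (hF : Measurable (Function.uncurry F))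
    (h1 : ∀ᵐ t ∂(volume.restrict (Set.Ioo (0 : ℝ) T)),
      ENNReal.ofReal (t ^ δ₁) *
          (∫⁻ x, ENNReal.ofReal ((μ + ‖F t x‖ ^ 2) ^ (p / 2)) ∂ν) ^ (1 / p)
        ≤ ENNReal.ofReal K₁)
    (h2 : ∫⁻ t in Set.Ioo (0 : ℝ) T, (ENNReal.ofReal (t ^ (2 * δ₂)) *
          ∫⁻ x, ENNReal.ofReal ((μ + ‖F t x‖ ^ 2) ^ ((p - 2) / 2) * ‖g t x‖ ^ 2) ∂ν)
        ≤ ENNReal.ofReal K₂) :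
    ∫⁻ t in Set.Ioo (0 : ℝ) T, (ENNReal.ofReal (t ^ (2 * δ)) *
          (∫⁻ x, ENNReal.ofReal (‖g t x‖ ^ p) ∂ν) ^ (2 / p))
      ≤ ENNReal.ofReal (K₁ ^ (2 - p) * K₂) :=
  stmt_6_general ν T p μ δ₁ δ₂ δ K₁ K₂ hp1 hp2 hμ hδ hK₁ d g F hg hF h1 h2
end

section
/- Let (X, ν) be a measure space, 1 < p < 2, μ > 0, and M ≥ 0. Let w_m, w : X → ℝ^d be measurable with w_m → w ν-almost everywhere as m → ∞, let ψ : X → ℝ^d satisfy ∫_X |ψ|² dν < ∞, and let g_m : X → ℝ^d be measurable with ∫_X |g_m|² dν ≤ M² for all m. Then ∫_X ((μ+|w_m|²)^((p−2)/2) − (μ+|w|²)^((p−2)/2)) ⟨g_m, ψ⟩ dν → 0 as m → ∞. -/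
/-!
The coefficient `(μ + |w_m|²)^((p-2)/2) - (μ + |w|²)^((p-2)/2)` is bounded by `μ^((p-2)/2)`
(the exponent is negative) and tends to `0` almost everywhere, so by dominated convergence its
product with `ψ ∈ L²` tends to `0` in `L²`. Cauchy–Schwarz in `L²` against the bounded sequence
`g_m` then forces the integrals to `0`.
-/

open MeasureTheory Filter Topology
open scoped RealInnerProductSpace ENNReal

theorem abs_rpow_add_sub_rpow_add_le {μ e s t : ℝ} (hμ : 0 < μ) (he : e ≤ 0) (hs : 0 ≤ s)
    (ht : 0 ≤ t) : |(μ + s) ^ e - (μ + t) ^ e| ≤ μ ^ e :=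
  abs_sub_le_of_nonneg_of_le (by positivity)
    (Real.rpow_le_rpow_of_nonpos hμ (le_add_of_nonneg_right hs) he) (by positivity)
    (Real.rpow_le_rpow_of_nonpos hμ (le_add_of_nonneg_right ht) he)

section

variable {X E : Type*} [MeasurableSpace X] {ν : Measure X} [NormedAddCommGroup E]

theorem eLpNorm_two_eq_lintegral_ofReal_sq_rpow (f : X → E) :
    eLpNorm f 2 ν = (∫⁻ x, ENNReal.ofReal (‖f x‖ ^ 2) ∂ν) ^ (1 / 2 : ℝ) := by
  simp [eLpNorm_eq_lintegral_rpow_enorm_toReal, ENNReal.ofReal_pow]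

theorem enorm_integral_inner_le_eLpNorm_mul_eLpNorm [InnerProductSpace ℝ E] {g h : X → E}
    (hg : AEStronglyMeasurable g ν) (hh : AEStronglyMeasurable h ν) :
    ‖∫ x, ⟪g x, h x⟫ ∂ν‖ₑ ≤ eLpNorm g 2 ν * eLpNorm h 2 ν := by
  calc ‖∫ x, ⟪g x, h x⟫ ∂ν‖ₑ ≤ eLpNorm (fun x => ⟪g x, h x⟫) 1 ν := by
        rw [eLpNorm_one_eq_lintegral_enorm]
        exact enorm_integral_le_lintegral_enorm _
    _ ≤ (1 : NNReal) * eLpNorm g 2 ν * eLpNorm h 2 ν :=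
        eLpNorm_le_eLpNorm_mul_eLpNorm'_of_norm hg hh (fun u v => ⟪u, v⟫) 1
          (Eventually.of_forall fun x => by simpa using norm_inner_le_norm (𝕜 := ℝ) (g x) (h x))
    _ = eLpNorm g 2 ν * eLpNorm h 2 ν := by simp

theorem tendsto_eLpNorm_smul_of_tendsto_ae_zero [NormedSpace ℝ E] {ι : Type*} {l : Filter ι}
    [l.IsCountablyGenerated] {p : ℝ≥0∞} (hp : p ≠ ∞) {f : ι → X → ℝ} {ψ : X → E} {C : ℝ}
    (hf : ∀ i, AEStronglyMeasurable (f i) ν) (hfC : ∀ i, ∀ᵐ x ∂ν, ‖f i x‖ ≤ C)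
    (hf0 : ∀ᵐ x ∂ν, Tendsto (fun i => f i x) l (𝓝 0)) (hψ : MemLp ψ p ν) :
    Tendsto (fun i => eLpNorm (fun x => f i x • ψ x) p ν) l (𝓝 0) := by
  rcases eq_or_ne p 0 with rfl | hp0
  · simpa using tendsto_const_nhds
  have hq : 0 < p.toReal := ENNReal.toReal_pos hp0 hp
  simp_rw [eLpNorm_eq_lintegral_rpow_enorm_toReal hp0 hp]
  have hlim : Tendsto (fun i => ∫⁻ x, ‖f i x • ψ x‖ₑ ^ p.toReal ∂ν) l (𝓝 0) := by
    have hfin : ∫⁻ x, ENNReal.ofReal C ^ p.toReal * ‖ψ x‖ₑ ^ p.toReal ∂ν ≠ ∞ := by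
      rw [lintegral_const_mul' _ _ (by finiteness)]
      exact ENNReal.mul_ne_top (by finiteness)
        (lintegral_rpow_enorm_lt_top_of_eLpNorm_lt_top hp0 hp hψ.eLpNorm_lt_top).ne
    simpa using tendsto_lintegral_filter_of_dominated_convergence' _
      (l := l) (f := fun _ => 0) (F := fun i x => ‖f i x • ψ x‖ₑ ^ p.toReal)
      (Eventually.of_forall fun i => ((hf i).smul hψ.1).enorm.pow_const p.toReal)
      (Eventually.of_forall fun i => (hfC i).mono fun x hx => by
        rw [enorm_smul, ENNReal.mul_rpow_of_nonneg _ _ hq.le]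
        gcongr
        rw [← ofReal_norm]
        exact ENNReal.ofReal_le_ofReal hx)
      hfin
      (hf0.mono fun x hx => by
        have hx' : Tendsto (fun i => ‖f i x • ψ x‖ₑ) l (𝓝 0) := by
          simpa [Function.comp_def] using (continuous_enorm.tendsto _).comp (hx.smul_const (ψ x))
        simpa [hq, Function.comp_def] using
          (ENNReal.continuous_rpow_const (y := p.toReal)).tendsto 0 |>.comp hx')
  simpa [hq, Function.comp_def] using
    ((ENNReal.continuous_rpow_const (y := 1 / p.toReal)).tendsto 0).comp hlim

end

theorem stmt_10_general {X : Type*} [MeasurableSpace X] (ν : Measure X)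
    (p μ M : ℝ) (hp2 : p < 2) (hμ : 0 < μ)
    (d : ℕ) (w : X → EuclideanSpace ℝ (Fin d)) (wseq : ℕ → X → EuclideanSpace ℝ (Fin d))
    (ψ : X → EuclideanSpace ℝ (Fin d)) (gseq : ℕ → X → EuclideanSpace ℝ (Fin d))
    (hwm : ∀ m, Measurable (wseq m)) (hw : Measurable w)
    (hconv : ∀ᵐ x ∂ν, Tendsto (fun m => wseq m x) atTop (nhds (w x)))
    (hψm : Measurable ψ) (hψ : ∫⁻ x, ENNReal.ofReal (‖ψ x‖ ^ 2) ∂ν ≠ ⊤)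
    (hgm : ∀ m, Measurable (gseq m))
    (hg : ∀ m, ∫⁻ x, ENNReal.ofReal (‖gseq m x‖ ^ 2) ∂ν ≤ ENNReal.ofReal (M ^ 2)) :
    Tendsto (fun m =>
        ∫ x, ((μ + ‖wseq m x‖ ^ 2) ^ ((p - 2) / 2) - (μ + ‖w x‖ ^ 2) ^ ((p - 2) / 2)) *
          ⟪gseq m x, ψ x⟫ ∂ν)
      atTop (nhds 0) := by
  set e := (p - 2) / 2
  have he : e ≤ 0 := by simp only [e]; linarith
  set f : ℕ → X → ℝ := fun m x => (μ + ‖wseq m x‖ ^ 2) ^ e - (μ + ‖w x‖ ^ 2) ^ e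
  have hcoeff : Continuous fun v : EuclideanSpace ℝ (Fin d) => (μ + ‖v‖ ^ 2) ^ e :=
    Continuous.rpow_const (by fun_prop) fun v => Or.inl (by positivity)
  have hf0 : ∀ᵐ x ∂ν, Tendsto (fun m => f m x) atTop (𝓝 0) := hconv.mono fun x hx =>
    tendsto_sub_nhds_zero_iff.2 ((hcoeff.tendsto _).comp hx)
  have hfψ : Tendsto (fun m => eLpNorm (fun x => f m x • ψ x) 2 ν) atTop (𝓝 0) := by
    refine tendsto_eLpNorm_smul_of_tendsto_ae_zero (C := μ ^ e) ENNReal.ofNat_ne_top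
      (fun m => by fun_prop) (fun m => Eventually.of_forall fun x => ?_) hf0
      ⟨hψm.aestronglyMeasurable, ?_⟩
    · exact abs_rpow_add_sub_rpow_add_le hμ he (by positivity) (by positivity)
    · rw [eLpNorm_two_eq_lintegral_ofReal_sq_rpow]
      exact ENNReal.rpow_lt_top_of_nonneg (by norm_num) hψ
  have hgM : ∀ m, eLpNorm (gseq m) 2 ν ≤ ENNReal.ofReal (M ^ 2) ^ (1 / 2 : ℝ) := fun m => by
    rw [eLpNorm_two_eq_lintegral_ofReal_sq_rpow]
    gcongr
    exact hg m
  have hbound : Tendsto (fun m => ENNReal.ofReal (M ^ 2) ^ (1 / 2 : ℝ) *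
      eLpNorm (fun x => f m x • ψ x) 2 ν) atTop (𝓝 0) := by
    simpa using ENNReal.Tendsto.const_mul hfψ (Or.inr (by finiteness))
  rw [tendsto_zero_iff_enorm_tendsto_zero]
  refine tendsto_of_tendsto_of_tendsto_of_le_of_le tendsto_const_nhds hbound
    (fun _ => bot_le) (fun m => ?_)
  calc _ = ‖∫ x, ⟪gseq m x, f m x • ψ x⟫ ∂ν‖ₑ := by simp_rw [inner_smul_right]; rfl
    _ ≤ eLpNorm (gseq m) 2 ν * eLpNorm (fun x => f m x • ψ x) 2 ν :=
      enorm_integral_inner_le_eLpNorm_mul_eLpNorm (hgm m).aestronglyMeasurable (by fun_prop)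
    _ ≤ _ := by gcongr; exact hgM m

/-- Measure-theoretic core of Lemma 2.4. -/
theorem stmt_10 {X : Type*} [MeasurableSpace X] (ν : Measure X)
    (p μ M : ℝ) (hp1 : 1 < p) (hp2 : p < 2) (hμ : 0 < μ) (hM : 0 ≤ M)
    (d : ℕ) (w : X → EuclideanSpace ℝ (Fin d)) (wseq : ℕ → X → EuclideanSpace ℝ (Fin d))
    (ψ : X → EuclideanSpace ℝ (Fin d)) (gseq : ℕ → X → EuclideanSpace ℝ (Fin d))
    (hwm : ∀ m, Measurable (wseq m)) (hw : Measurable w)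
    (hconv : ∀ᵐ x ∂ν, Tendsto (fun m => wseq m x) atTop (nhds (w x)))
    (hψm : Measurable ψ) (hψ : ∫⁻ x, ENNReal.ofReal (‖ψ x‖ ^ 2) ∂ν ≠ ⊤)
    (hgm : ∀ m, Measurable (gseq m))
    (hg : ∀ m, ∫⁻ x, ENNReal.ofReal (‖gseq m x‖ ^ 2) ∂ν ≤ ENNReal.ofReal (M ^ 2)) :
    Tendsto (fun m =>
        ∫ x, ((μ + ‖wseq m x‖ ^ 2) ^ ((p - 2) / 2) - (μ + ‖w x‖ ^ 2) ^ ((p - 2) / 2)) *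
          ⟪gseq m x, ψ x⟫ ∂ν)
      atTop (nhds 0) :=
  stmt_10_general ν p μ M hp2 hμ d w wseq ψ gseq hwm hw hconv hψm hψ hgm hg
end
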